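/- For all integers m, p, l ≥ 1, Σ_{n=1}^∞ H_n^{(p)} / ((n+m)·C(n+m+l, l)) = Σ_{j=0}^{l−1} C(l−1, j) · (−1)^j · { (−1)^{p−1} · H_{m+j} / (m+j)^p + Σ_{k=1}^{p−1} (−1)^{k−1} · ζ(p+1−k) / (m+j)^k }. -/

import Mathlib

/-!
Partial fractions give `1/((n+m) C(n+m+l, l)) = l!/((n+m)(n+m+1)⋯(n+m+l))
= ∑_{j<l} (-1)^j C(l-1, j) / ((n+m+j)(n+m+j+1))`: the right-hand side is the `(l-1)`-st
forward difference of `1/(x(x+1))`. For `a = m + j`, Abel summation against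
`1/(n+a) - 1/(n+a+1)` turns `∑ H_n^{(p)} / ((n+a)(n+a+1))` into `μ(p, a) = ∑ 1/(n^p (n+a))`;
the boundary term `H_N^{(p)}/N` vanishes because Cesàro means of `1/n^p` tend to `0`.
Finally `μ(1, a) = H_a / a` by telescoping, and `1/(n^{p+1}(n+a)) = (1/n^{p+1} - 1/(n^p(n+a)))/a`
gives `μ(p+1, a) = (ζ(p+1) - μ(p, a))/a`, a recursion the closed form satisfies.
-/

open Finset Real

/-- The generalized harmonic number `H_n^{(p)} = ∑_{k=1}^n 1/k^p`. -/
noncomputable def gH (p : ℤ) (n : ℕ) : ℝ := ∑ k ∈ Finset.Icc 1 n, ((k : ℝ) ^ p)⁻¹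

/-- The generalized hyperharmonic number `H_n^{(p,q)}`:
`H_n^{(p,0)} = 1/n^p` (with `H_0^{(p,q)} = 0`) and
`H_n^{(p,q)} = ∑_{k=1}^n H_k^{(p,q-1)}` for `q ≥ 1`. -/
noncomputable def gHH (p : ℤ) : ℕ → ℕ → ℝ
  | 0, n => if n = 0 then 0 else ((n : ℝ) ^ p)⁻¹
  | q + 1, n => ∑ k ∈ Finset.Icc 1 n, gHH p q k

/-- Euler sum of generalized harmonic numbers `ζ_{H^{(p)}}(r) = ∑_{n≥1} H_n^{(p)}/n^r`. -/
noncomputable def eulerSum (p r : ℤ) : ℝ := ∑' n : ℕ+, gH p n / (n : ℝ) ^ r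

/-- Euler sum of generalized hyperharmonic numbers
`ζ_{H^{(p,q)}}(r) = ∑_{n≥1} H_n^{(p,q)}/n^r`. -/
noncomputable def eulerSumHH (p : ℤ) (q : ℕ) (r : ℤ) : ℝ := ∑' n : ℕ+, gHH p q n / (n : ℝ) ^ r

/-- Riemann zeta value at an integer argument, `ζ(s) = ∑_{n≥1} 1/n^s`. -/
noncomputable def zv (s : ℤ) : ℝ := ∑' n : ℕ+, ((n : ℝ) ^ s)⁻¹

/-- Unsigned Stirling numbers of the first kind, defined by
`x(x+1)⋯(x+q-1) = ∑_{k=0}^q [q,k] x^k`, i.e. `[n+1,k] = [n,k-1] + n·[n,k]`. -/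
def stirlingFirst : ℕ → ℕ → ℕ
  | 0, 0 => 1
  | 0, _ + 1 => 0
  | _ + 1, 0 => 0
  | n + 1, k + 1 => stirlingFirst n k + n * stirlingFirst n (k + 1)

/-- The series `μ(r,j) = ∑_{n≥1} 1/(n^r (n+j))`. -/
noncomputable def mu (r j : ℕ) : ℝ := ∑' n : ℕ+, 1 / ((n : ℝ) ^ r * ((n : ℝ) + j))

/-- `e_j(n+1, n+2, …, n+q)`: the `j`-th elementary symmetric polynomial
evaluated at the numbers `n+1, …, n+q`. -/
noncomputable def esymmVal (n q j : ℕ) : ℝ :=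
  ∑ s ∈ Finset.powersetCard j (Finset.Icc 1 q), ∏ i ∈ s, ((n : ℝ) + i)

open Filter Topology
open scoped fwdDiff Nat

/-- The Beta function `B(x, r + 1)`. -/
noncomputable def betaNat (r : ℕ) (x : ℝ) : ℝ := r ! / ∏ j ∈ range (r + 1), (x + j)

lemma betaNat_sub_betaNat_add_one (r : ℕ) {x : ℝ} (hx : 0 < x) :
    betaNat r x - betaNat r (x + 1) = betaNat (r + 1) x := by
  have hprod : ∀ y : ℝ, 0 < y → 0 < ∏ j ∈ range (r + 1), (y + j) := fun y hy =>
    prod_pos fun j _ => by positivity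
  have hshift : (∏ j ∈ range (r + 1), (x + 1 + j)) * x
      = (∏ j ∈ range (r + 1), (x + j)) * (x + (r + 1)) := by
    have h := prod_range_succ' (fun j : ℕ => x + j) (r + 1)
    rw [prod_range_succ] at h
    push_cast at h
    rw [add_zero] at h
    rw [h]
    exact congrArg (· * x) (prod_congr rfl fun j _ => by ring)
  have h1 := hprod x hx
  have h2 := hprod (x + 1) (by linarith)
  unfold betaNat
  rw [prod_range_succ _ (r + 1), Nat.factorial_succ]
  field_simp
  push_cast
  linear_combination (r ! : ℝ) * hshift

lemma fwdDiff_iter_betaNat (r l : ℕ) {x : ℝ} (hx : 0 < x) :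
    (Δ_[1])^[l] (betaNat r) x = (-1) ^ l * betaNat (r + l) x := by
  induction l generalizing x with
  | zero => simp
  | succ l ih =>
    rw [Function.iterate_succ_apply', fwdDiff, ih hx, ih (by linarith), ← add_assoc,
      ← betaNat_sub_betaNat_add_one _ hx]
    ring

lemma sum_range_choose_mul_betaNat (r l : ℕ) {x : ℝ} (hx : 0 < x) :
    ∑ j ∈ range (l + 1), (-1) ^ j * (l.choose j : ℝ) * betaNat r (x + j) = betaNat (r + l) x := by
  have h := fwdDiff_iter_eq_sum_shift 1 (betaNat r) l x
  rw [fwdDiff_iter_betaNat r l hx] at h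
  calc ∑ j ∈ range (l + 1), (-1) ^ j * (l.choose j : ℝ) * betaNat r (x + j)
      = (-1) ^ l * ∑ j ∈ range (l + 1),
          ((-1 : ℤ) ^ (l - j) * l.choose j) • betaNat r (x + j • 1) := by
        rw [mul_sum]
        refine sum_congr rfl fun j hj => ?_
        obtain ⟨i, rfl⟩ := Nat.exists_eq_add_of_le (Nat.le_of_lt_succ (mem_range.1 hj))
        simp only [zsmul_eq_mul, nsmul_eq_mul, mul_one, Nat.add_sub_cancel_left]
        have hsign : (-1 : ℝ) ^ (j + i) * (-1) ^ i = (-1) ^ j := by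
          rw [← pow_add, add_assoc, ← two_mul, pow_add, pow_mul]
          norm_num
        push_cast
        rw [← hsign]
        ring
    _ = betaNat (r + l) x := by
        rw [← h, ← mul_assoc, ← pow_add, ← two_mul, pow_mul]
        norm_num

lemma betaNat_one (x : ℝ) : betaNat 1 x = 1 / (x * (x + 1)) := by
  simp [betaNat, prod_range_succ]

lemma betaNat_natCast (l A : ℕ) : betaNat l A = 1 / (A * (A + l).choose l) := by
  have hprod : ∏ j ∈ range (l + 1), ((A : ℝ) + j) = A * l ! * (A + l).choose l := by
    have h := (A + 1).ascFactorial_eq_prod_range l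
    rw [Nat.ascFactorial_eq_factorial_mul_choose] at h
    rw [prod_range_succ', mul_assoc, ← Nat.cast_mul, h, mul_comm]
    push_cast
    rw [add_zero]
    exact congrArg ((A : ℝ) * ·) (prod_congr rfl fun j _ => by ring)
  rw [betaNat, hprod, mul_right_comm, ← div_div, div_right_comm, div_self (by positivity)]

lemma sum_Icc_one_eq_sum_range {M : Type*} [AddCommMonoid M] (f : ℕ → M) (n : ℕ) :
    ∑ k ∈ Icc 1 n, f k = ∑ k ∈ range n, f (k + 1) := by
  induction n with
  | zero => simp
  | succ n ih => rw [sum_Icc_succ_top (by omega), ih, sum_range_succ]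

lemma gH_eq_sum_range (p : ℤ) (n : ℕ) : gH p n = ∑ k ∈ range n, (((k : ℝ) + 1) ^ p)⁻¹ := by
  simp [gH, sum_Icc_one_eq_sum_range]

lemma gH_succ (p : ℤ) (n : ℕ) : gH p (n + 1) = gH p n + (((n : ℝ) + 1) ^ p)⁻¹ := by
  simp [gH_eq_sum_range, sum_range_succ]

lemma gH_nonneg (p : ℤ) (n : ℕ) : 0 ≤ gH p n :=
  sum_nonneg fun k _ => by positivity

lemma hasSum_sub_succ_of_antitone {f : ℕ → ℝ} (hf : Antitone f) (h0 : Tendsto f atTop (𝓝 0)) :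
    HasSum (fun n => f n - f (n + 1)) (f 0) := by
  refine (hasSum_iff_tendsto_nat_of_nonneg (fun n => sub_nonneg.2 (hf n.le_succ)) _).2 ?_
  simp_rw [sum_range_sub']
  simpa using (tendsto_const_nhds (x := f 0)).sub h0

lemma hasSum_sub_add_of_antitone {f : ℕ → ℝ} (hf : Antitone f) (h0 : Tendsto f atTop (𝓝 0))
    (a : ℕ) : HasSum (fun n => f n - f (n + a)) (∑ i ∈ range a, f i) := by
  have h : ∀ i, HasSum (fun n => f (n + i) - f (n + 1 + i)) (f i) := fun i => by
    simpa only [zero_add] using hasSum_sub_succ_of_antitone (f := fun n => f (n + i))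
      (fun m n hmn => hf (by omega)) (h0.comp (tendsto_add_atTop_nat i))
  convert hasSum_sum fun i (_ : i ∈ range a) => h i using 1
  funext n
  have htel := sum_range_sub' (fun i => f (n + i)) a
  rw [add_zero] at htel
  rw [← htel]
  exact sum_congr rfl fun i _ => by ring_nf

lemma hasSum_zv {s : ℤ} (hs : 1 < s) : HasSum (fun n : ℕ+ => ((n : ℝ) ^ s)⁻¹) (zv s) := by
  lift s to ℕ using (by omega)
  simp only [zpow_natCast]
  exact (summable_pnat_iff_summable_nat.2 (Real.summable_nat_pow_inv.2 (by omega))).hasSum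

lemma hasSum_one_div_pow_one_mul_add {a : ℕ} (ha : 1 ≤ a) :
    HasSum (fun n : ℕ+ => 1 / ((n : ℝ) ^ 1 * (n + a))) (gH 1 a / a) := by
  have hf : Antitone fun n : ℕ => 1 / ((n : ℝ) + 1) := fun m n hmn =>
    one_div_le_one_div_of_le (by positivity) (by exact_mod_cast Nat.add_le_add_right hmn 1)
  have h := (hasSum_sub_add_of_antitone hf tendsto_one_div_add_atTop_nhds_zero_nat a).div_const a
  rw [hasSum_pnat_iff_hasSum_succ (f := fun n : ℕ => 1 / ((n : ℝ) ^ 1 * (n + a)))]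
  rw [show gH 1 a / a = (∑ i ∈ range a, 1 / ((i : ℝ) + 1)) / a by simp [gH_eq_sum_range]]
  refine h.congr_fun fun n => ?_
  have : (0 : ℝ) < a := by exact_mod_cast ha
  push_cast
  field_simp
  ring

lemma HasSum.one_div_pow_succ_mul_add {p : ℕ} (hp : 1 ≤ p) {a : ℝ} (ha : 0 < a) {M : ℝ}
    (h : HasSum (fun n : ℕ+ => 1 / ((n : ℝ) ^ p * (n + a))) M) :
    HasSum (fun n : ℕ+ => 1 / ((n : ℝ) ^ (p + 1) * (n + a))) ((zv (p + 1) - M) / a) := by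
  refine (((hasSum_zv (s := p + 1) (by omega)).sub h).div_const a).congr_fun fun n => ?_
  have hn : (0 : ℝ) < n := by positivity
  rw [show ((p : ℤ) + 1) = ((p + 1 : ℕ) : ℤ) by push_cast; ring, zpow_natCast]
  field_simp
  ring

noncomputable def muFormula (p a : ℕ) : ℝ :=
  (-1) ^ (p - 1) * gH 1 a / (a : ℝ) ^ p
    + ∑ k ∈ Icc 1 (p - 1), (-1) ^ (k - 1) * zv ((p : ℤ) + 1 - k) / (a : ℝ) ^ k

lemma muFormula_succ {p : ℕ} (hp : 1 ≤ p) (a : ℕ) :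
    muFormula (p + 1) a = (zv (p + 1) - muFormula p a) / a := by
  obtain ⟨q, rfl⟩ := Nat.exists_eq_add_of_le' hp
  simp only [muFormula, Nat.add_sub_cancel, sum_Icc_one_eq_sum_range]
  rw [sum_range_succ']
  push_cast
  have hz : ∀ k : ℕ, zv ((q : ℤ) + 1 + 1 + 1 - ((k : ℤ) + 1 + 1)) = zv ((q : ℤ) + 1 + 1 - (k + 1)) :=
    fun k => by ring_nf
  have hsum : ∑ k ∈ range q, (-1) ^ (k + 1) * zv ((q : ℤ) + 1 + 1 - (k + 1)) / (a : ℝ) ^ (k + 1 + 1)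
      = -∑ k ∈ range q, (-1) ^ k * zv ((q : ℤ) + 1 + 1 - (k + 1)) / (a : ℝ) ^ (k + 1) / a := by
    rw [← sum_neg_distrib]
    exact sum_congr rfl fun k _ => by ring
  simp only [hz, hsum, show (q : ℤ) + 1 + 1 + 1 - 1 = q + 1 + 1 by ring]
  rw [sub_div, add_div, sum_div]
  ring

lemma hasSum_one_div_pow_mul_add {p a : ℕ} (hp : 1 ≤ p) (ha : 1 ≤ a) :
    HasSum (fun n : ℕ+ => 1 / ((n : ℝ) ^ p * (n + a))) (muFormula p a) := by
  induction p, hp using Nat.le_induction with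
  | base => simpa [muFormula] using hasSum_one_div_pow_one_mul_add ha
  | succ p hp ih =>
    rw [muFormula_succ hp]
    exact ih.one_div_pow_succ_mul_add hp (by exact_mod_cast ha)

lemma sum_range_succ_mul_sub {R : Type*} [CommRing R] (H b : ℕ → R) (N : ℕ) :
    ∑ n ∈ range N, H (n + 1) * (b n - b (n + 1))
      = ∑ n ∈ range N, (H (n + 1) - H n) * b n + H 0 * b 0 - H N * b N := by
  induction N with
  | zero => simp
  | succ N ih =>
    rw [sum_range_succ, sum_range_succ, ih]
    ring

lemma tendsto_gH_div_add_atTop {p : ℕ} (hp : 1 ≤ p) {a : ℝ} (ha : 0 ≤ a) :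
    Tendsto (fun N : ℕ => gH p N / (N + a)) atTop (𝓝 0) := by
  have hterm : Tendsto (fun k : ℕ => (((k : ℝ) + 1) ^ (p : ℤ))⁻¹) atTop (𝓝 0) := by
    simp only [zpow_natCast]
    exact ((tendsto_pow_atTop (by omega)).comp
      (tendsto_atTop_add_const_right _ 1 tendsto_natCast_atTop_atTop)).inv_tendsto_atTop
  have hmean := hterm.cesaro
  simp only [← gH_eq_sum_range] at hmean
  refine squeeze_zero' (Eventually.of_forall fun N => by have := gH_nonneg p N; positivity) ?_ hmean
  filter_upwards [eventually_gt_atTop 0] with N hN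
  rw [inv_mul_eq_div]
  exact div_le_div_of_nonneg_left (gH_nonneg p N) (by exact_mod_cast hN) (by linarith)

lemma HasSum.gH_div_mul_add {p : ℕ} (hp : 1 ≤ p) {a : ℝ} (ha : 0 ≤ a) {S : ℝ}
    (h : HasSum (fun n : ℕ+ => 1 / ((n : ℝ) ^ p * (n + a))) S) :
    HasSum (fun n : ℕ+ => gH p n / (((n : ℝ) + a) * ((n : ℝ) + a + 1))) S := by
  rw [hasSum_pnat_iff_hasSum_succ (f := fun n : ℕ => 1 / ((n : ℝ) ^ p * (n + a)))] at h
  rw [hasSum_pnat_iff_hasSum_succ (f := fun n : ℕ => gH p n / (((n : ℝ) + a) * ((n : ℝ) + a + 1)))]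
  set b : ℕ → ℝ := fun n => 1 / ((n : ℝ) + 1 + a)
  have hterm : ∀ n : ℕ, gH p (n + 1) / (((n + 1 : ℕ) + a) * (((n + 1 : ℕ) : ℝ) + a + 1))
      = gH p (n + 1) * (b n - b (n + 1)) := fun n => by
    simp only [b]
    push_cast
    field_simp
    ring
  have hpart : ∀ N, ∑ n ∈ range N, gH p (n + 1) * (b n - b (n + 1))
      = ∑ n ∈ range N, 1 / (((n + 1 : ℕ) : ℝ) ^ p * ((n + 1 : ℕ) + a)) - gH p N / (N + (a + 1)) :=
    fun N => by
    rw [sum_range_succ_mul_sub]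
    simp only [gH_succ, add_sub_cancel_left, b]
    simp [gH, div_eq_mul_inv, add_assoc, add_comm a 1, mul_comm]
  simp only [hterm]
  refine (hasSum_iff_tendsto_nat_of_nonneg (fun n => ?_) _).2 ?_
  · rw [← hterm]; have := gH_nonneg p (n + 1); positivity
  · simp only [hpart]
    simpa using h.tendsto_sum_nat.sub (tendsto_gH_div_add_atTop hp (by linarith : 0 ≤ a + 1))

lemma one_div_mul_choose_eq_sum {A : ℕ} (hA : 0 < A) (q : ℕ) :
    1 / ((A : ℝ) * (A + (q + 1)).choose (q + 1))
      = ∑ j ∈ range (q + 1), (-1) ^ j * (q.choose j : ℝ) * (1 / ((A + j) * (A + j + 1))) := by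
  have h := sum_range_choose_mul_betaNat 1 q (x := A) (by positivity)
  rw [add_comm 1 q, betaNat_natCast] at h
  simp only [← h, betaNat_one]

/-- Evaluation of the series of generalized harmonic numbers over
reciprocal binomial coefficients, `m, p, l ≥ 1`. -/
theorem stmt_10 (m p l : ℕ) (hm : 1 ≤ m) (hp : 1 ≤ p) (hl : 1 ≤ l) :
    ∑' n : ℕ+, gH p n / (((n : ℝ) + m) * ((((n : ℕ) + m + l).choose l : ℕ) : ℝ))
      = ∑ j ∈ Finset.range l, ((l - 1).choose j : ℝ) * (-1 : ℝ) ^ j *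
          ((-1 : ℝ) ^ (p - 1) * gH 1 (m + j) / ((m : ℝ) + j) ^ p
            + ∑ k ∈ Finset.Icc 1 (p - 1),
                (-1 : ℝ) ^ (k - 1) * zv ((p : ℤ) + 1 - k) / ((m : ℝ) + j) ^ k) := by
  obtain ⟨q, rfl⟩ := Nat.exists_eq_add_of_le' hl
  have hterm : ∀ n : ℕ+, gH p n / (((n : ℝ) + m) * ((((n : ℕ) + m + (q + 1)).choose (q + 1) : ℕ) : ℝ))
      = ∑ j ∈ range (q + 1), (q.choose j : ℝ) * (-1) ^ j *
          (gH p n / (((n : ℝ) + (m + j : ℕ)) * ((n : ℝ) + (m + j : ℕ) + 1))) := fun n => by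
    have h := one_div_mul_choose_eq_sum (A := n + m) (by positivity) q
    push_cast at h ⊢
    rw [div_eq_mul_one_div, h, mul_sum]
    exact sum_congr rfl fun j _ => by ring
  have hsum := hasSum_sum fun j (_ : j ∈ range (q + 1)) =>
    ((hasSum_one_div_pow_mul_add hp (a := m + j) (by omega)).gH_div_mul_add hp
      (by positivity)).mul_left ((q.choose j : ℝ) * (-1) ^ j)
  rw [(hsum.congr_fun hterm).tsum_eq]
  simp only [muFormula, Nat.cast_add, Nat.add_sub_cancel]
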